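/- For $n \geq 2$, the distance Laplacian spectrum of $\Gamma_{Q_{4n}} = K_{2n-2,2,\ldots,2}$ (with $n$ parts of size 2, on $4n-2$ vertices) consists of the eigenvalue $0$ with multiplicity $1$, the eigenvalues $4n-2$ and $4n$ each with multiplicity $n$, and the eigenvalue $6n-4$ with multiplicity $2n-3$. In particular, $\Gamma_{Q_{4n}}$ is distance Laplacian integral for all $n$. -/

import Mathlib

/-!
In a complete multipartite graph with at least two parts, none of them empty, distinct vertices
are at distance `1` in different parts and `2` in the same part. So, with `N` vertices, part sizes
`m i`, `J` the all-ones matrix, `S` the vertex–part incidence matrix and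
`E = diag (m ∘ part) - S Sᵀ` (the Laplacian of the union of the cliques on the parts),
`D^L = N • 1 - J + E`.

If `P Q = 0` then `(X - P) (X - Q) = X (X - (P + Q))`, hence `X ^ N χ(P + Q) = χ(P) χ(Q)`.
As `E (S Sᵀ) = 0` with `E + S Sᵀ` diagonal, and `E J = 0`, this determines `χ(E)` and then
`χ(E - J)` from the characteristic polynomials of the rank-one `J` and of `S Sᵀ` (that of
`Sᵀ S = diag m` up to a power of `X`). Shifting by `N`, the spectrum of `D^L` is `0`, then `N` with
multiplicity `#parts - 1`, and `N + m i` with multiplicity `m i - 1` for each part.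
-/

open Polynomial

/-- The distance matrix of a graph, with real entries. -/
noncomputable def distMatrix {V : Type*} [Fintype V] (G : SimpleGraph V) : Matrix V V ℝ :=
  Matrix.of fun u v => (G.dist u v : ℝ)

/-- The distance Laplacian matrix `Tr(G) - D(G)`. -/
noncomputable def distLapMatrix {V : Type*} [Fintype V] [DecidableEq V] (G : SimpleGraph V) :
    Matrix V V ℝ :=
  Matrix.diagonal (fun v => ∑ u, (G.dist v u : ℝ)) - distMatrix G

namespace Matrix

variable {n R : Type*} [Fintype n] [DecidableEq n] [CommRing R]

theorem X_pow_mul_charpoly_add_of_mul_eq_zero {P Q : Matrix n n R} (h : P * Q = 0) :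
    X ^ Fintype.card n * (P + Q).charpoly = P.charpoly * Q.charpoly := by
  have hPQ : P.map C * Q.map C = 0 := by rw [← Matrix.map_mul, h, Matrix.map_zero _ C_0]
  have hfactor : P.charmatrix * Q.charmatrix = scalar n (X : R[X]) * (P + Q).charmatrix := by
    simp only [charmatrix, RingHom.mapMatrix_apply, Matrix.map_add _ (map_add C)]
    rw [sub_mul, mul_sub, mul_sub, hPQ, ← (scalar_commute X (Commute.all X) (P.map C)).eq,
      sub_zero, mul_sub, mul_add, sub_sub, add_comm (_ * Q.map C)]
  simp only [charpoly]
  rw [← det_mul, hfactor, det_mul, scalar_apply, det_diagonal, Finset.prod_const,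
    Finset.card_univ]

end Matrix

open Matrix

section PartMatrices

variable {ι : Type*} [Fintype ι] [DecidableEq ι] (R : Type*) [CommRing R] (α : ι → Type*)

def partIncidence : Matrix (Σ i, α i) ι R := of fun v i => if v.1 = i then 1 else 0

variable {R α}

theorem partIncidence_mul_transpose_apply (u v : Σ i, α i) :
    (partIncidence R α * (partIncidence R α)ᵀ) u v = if u.1 = v.1 then 1 else 0 := by
  simp [partIncidence, mul_apply]

theorem partIncidence_mulVec_one : partIncidence R α *ᵥ 1 = 1 := by
  ext v
  simp [partIncidence, mulVec, dotProduct]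

variable [∀ i, Fintype (α i)]

theorem partIncidence_transpose_mul :
    (partIncidence R α)ᵀ * partIncidence R α = diagonal fun i => (Fintype.card (α i) : R) := by
  ext i j
  by_cases h : i = j
  · subst h; simp [partIncidence, mul_apply, Fintype.sum_sigma]
  · simp [partIncidence, mul_apply, Fintype.sum_sigma, h, Ne.symm h]

variable (R α) [∀ i, DecidableEq (α i)]

def partLaplacian : Matrix (Σ i, α i) (Σ i, α i) R :=
  diagonal (fun v => (Fintype.card (α v.1) : R)) - partIncidence R α * (partIncidence R α)ᵀ

variable {R α}

theorem partLaplacian_mul_partIncidence : partLaplacian R α * partIncidence R α = 0 := by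
  rw [partLaplacian, Matrix.sub_mul, Matrix.mul_assoc, partIncidence_transpose_mul]
  ext v i
  by_cases h : v.1 = i
  · subst h; simp [partIncidence, diagonal_mul, mul_diagonal]
  · simp [partIncidence, diagonal_mul, mul_diagonal, h]

theorem partLaplacian_mul_vecMulVec_one : partLaplacian R α * vecMulVec 1 1 = 0 := by
  rw [mul_vecMulVec, ← partIncidence_mulVec_one, mulVec_mulVec, partLaplacian_mul_partIncidence,
    zero_mulVec, zero_vecMulVec]

theorem charpoly_partLaplacian [∀ i, Nonempty (α i)] :
    (partLaplacian R α).charpoly =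
      X ^ Fintype.card ι * ∏ i, (X - C (Fintype.card (α i) : R)) ^ (Fintype.card (α i) - 1) := by
  set S := partIncidence R α
  have hdiag : partLaplacian R α + S * Sᵀ = diagonal fun v => (Fintype.card (α v.1) : R) := by
    simp [partLaplacian, S]
  have hsum := X_pow_mul_charpoly_add_of_mul_eq_zero (P := partLaplacian R α) (Q := S * Sᵀ)
    (by rw [← Matrix.mul_assoc, partLaplacian_mul_partIncidence, Matrix.zero_mul])
  have hrank := charpoly_mul_comm' S Sᵀ
  rw [partIncidence_transpose_mul, charpoly_diagonal] at hrank
  have hprod : ∏ v : Σ i, α i, (X - C (Fintype.card (α v.1) : R)) =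
      ∏ i, (X - C (Fintype.card (α i) : R)) ^ Fintype.card (α i) :=
    (Fintype.prod_sigma' fun i (_ : α i) => X - C (Fintype.card (α i) : R)).trans (by simp)
  have hpow : ∀ i, (X - C (Fintype.card (α i) : R)) ^ Fintype.card (α i) =
      (X - C (Fintype.card (α i) : R)) *
        (X - C (Fintype.card (α i) : R)) ^ (Fintype.card (α i) - 1) :=
    fun i => by rw [← pow_succ', Nat.sub_add_cancel Fintype.card_pos]
  rw [hdiag, charpoly_diagonal, hprod] at hsum
  simp only [hpow, Finset.prod_mul_distrib] at hsum
  have hmonic : (X ^ Fintype.card (Σ i, α i) * ∏ i, (X - C (Fintype.card (α i) : R))).Monic :=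
    (monic_X_pow _).mul (monic_prod_of_monic _ _ fun i _ => monic_X_sub_C _)
  refine hmonic.isRegular.left.eq_iff.mp ?_
  linear_combination -X ^ Fintype.card ι * hsum - (partLaplacian R α).charpoly * hrank

theorem charpoly_partLaplacian_sub_vecMulVec_one [Nonempty ι] [∀ i, Nonempty (α i)] :
    (partLaplacian R α - vecMulVec 1 1).charpoly =
      X ^ (Fintype.card ι - 1) * (X + C (Fintype.card (Σ i, α i) : R)) *
        ∏ i, (X - C (Fintype.card (α i) : R)) ^ (Fintype.card (α i) - 1) := by
  have h := X_pow_mul_charpoly_add_of_mul_eq_zero (P := partLaplacian R α) (Q := -vecMulVec 1 1)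
    (by rw [Matrix.mul_neg, partLaplacian_mul_vecMulVec_one, neg_zero])
  rw [← sub_eq_add_neg, charpoly_partLaplacian, ← neg_vecMulVec, charpoly_vecMulVec] at h
  have hdot : (-1 : (Σ i, α i) → R) ⬝ᵥ 1 = -(Fintype.card (Σ i, α i) : R) := by
    simp [dotProduct]
  rw [hdot, smul_eq_C_mul] at h
  refine (isRegular_X_pow (Fintype.card (Σ i, α i))).left.eq_iff.mp ?_
  have : Nonempty (Σ i, α i) := ⟨⟨Classical.arbitrary ι, Classical.arbitrary _⟩⟩
  obtain ⟨k, hk⟩ := Nat.exists_eq_add_one_of_ne_zero (Fintype.card_ne_zero (α := ι))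
  obtain ⟨N, hN⟩ := Nat.exists_eq_add_one_of_ne_zero (Fintype.card_ne_zero (α := Σ i, α i))
  simp only [hk, hN, Nat.add_sub_cancel, map_neg] at h ⊢
  linear_combination h

end PartMatrices

namespace SimpleGraph

variable {ι : Type*} [DecidableEq ι] [Nontrivial ι] {α : ι → Type*} [∀ i, DecidableEq (α i)]
  [∀ i, Nonempty (α i)]

theorem completeMultipartiteGraph_dist (u v : Σ i, α i) :
    (completeMultipartiteGraph α).dist u v = if u = v then 0 else if u.1 = v.1 then 2 else 1 := by
  by_cases huv : u = v
  · simp [huv]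
  by_cases hpart : u.1 = v.1
  · obtain ⟨j, hj⟩ := exists_ne u.1
    have hw : (⟨j, Classical.arbitrary _⟩ : Σ i, α i) ∈
        (completeMultipartiteGraph α).commonNeighbors u v := by
      simp [commonNeighbors, completeMultipartiteGraph, ← hpart, Ne.symm hj]
    have h2 : (completeMultipartiteGraph α).edist u v = 2 :=
      edist_eq_two_iff.mpr ⟨huv, by simpa [completeMultipartiteGraph] using hpart, ⟨_, hw⟩⟩
    simp [dist, h2, huv, hpart]
  · have hadj : (completeMultipartiteGraph α).Adj u v := hpart
    simp [dist_eq_one_iff_adj.mpr hadj, huv, hpart]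

variable [Fintype ι] [∀ i, Fintype (α i)]

theorem completeMultipartiteGraph_sum_dist (u : Σ i, α i) :
    ∑ w, ((completeMultipartiteGraph α).dist u w : ℝ) =
      Fintype.card (Σ i, α i) + Fintype.card (α u.1) - 2 := by
  have hdist : ∀ w, ((completeMultipartiteGraph α).dist u w : ℝ) =
      1 + (if u.1 = w.1 then 1 else 0) - (if u = w then 2 else 0) := by
    intro w
    rw [completeMultipartiteGraph_dist]
    by_cases huw : u = w
    · norm_num [huw]
    · by_cases hpart : u.1 = w.1 <;> norm_num [huw, hpart]
  have hcount : ∑ w : Σ i, α i, (if u.1 = w.1 then (1 : ℝ) else 0) = Fintype.card (α u.1) :=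
    (Fintype.sum_sigma' fun i (_ : α i) => if u.1 = i then (1 : ℝ) else 0).trans (by simp)
  simp only [hdist, Finset.sum_sub_distrib, Finset.sum_add_distrib, Finset.sum_ite_eq,
    Finset.mem_univ, if_true, hcount]
  simp

theorem distLapMatrix_completeMultipartiteGraph :
    distLapMatrix (completeMultipartiteGraph α) =
      partLaplacian ℝ α - vecMulVec 1 1 + scalar _ (Fintype.card (Σ i, α i) : ℝ) := by
  ext u v
  simp only [distLapMatrix, distMatrix, Matrix.sub_apply, diagonal_apply, of_apply]
  rw [completeMultipartiteGraph_sum_dist, completeMultipartiteGraph_dist]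
  simp only [partLaplacian, Matrix.sub_apply, Matrix.add_apply, diagonal_apply,
    partIncidence_mul_transpose_apply, vecMulVec_apply, scalar_apply]
  by_cases huv : u = v
  · subst huv
    simp only [↓reduceIte, Fintype.card_sigma, Nat.cast_sum, CharP.cast_eq_zero, sub_zero,
      Pi.one_apply, mul_one]
    ring
  · by_cases hpart : u.1 = v.1 <;> norm_num [huv, hpart]

theorem charpoly_distLapMatrix_completeMultipartiteGraph :
    (distLapMatrix (completeMultipartiteGraph α)).charpoly =
      X * (X - C (Fintype.card (Σ i, α i) : ℝ)) ^ (Fintype.card ι - 1) *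
        ∏ i, (X - C ((Fintype.card (Σ i, α i) : ℝ) + Fintype.card (α i))) ^
          (Fintype.card (α i) - 1) := by
  rw [distLapMatrix_completeMultipartiteGraph, ← sub_neg_eq_add, ← map_neg, charpoly_sub_scalar,
    charpoly_partLaplacian_sub_vecMulVec_one]
  simp only [mul_comp, pow_comp, X_comp, add_comp, sub_comp, C_comp, Polynomial.prod_comp, map_neg,
    ← sub_eq_add_neg, sub_add_cancel, sub_sub, C_add]
  ring

end SimpleGraph

theorem charpoly_distLapMatrix_quaternion {n : ℕ} (hn : 2 ≤ n) :
    (distLapMatrix (SimpleGraph.completeMultipartiteGraph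
        fun i : Fin (n + 1) => Fin (if i = 0 then 2 * n - 2 else 2))).charpoly =
      X * (X - C (4 * (n : ℝ) - 2)) ^ n * (X - C (4 * (n : ℝ))) ^ n *
        (X - C (6 * (n : ℝ) - 4)) ^ (2 * n - 3) := by
  have : Nontrivial (Fin (n + 1)) := Fin.nontrivial_iff_two_le.mpr (by omega)
  have : ∀ i : Fin (n + 1), Nonempty (Fin (if i = 0 then 2 * n - 2 else 2)) :=
    fun i => ⟨⟨0, by split_ifs <;> omega⟩⟩
  have hpart : ((2 * n - 2 : ℕ) : ℝ) = 2 * n - 2 := by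
    rw [Nat.cast_sub (by omega)]; push_cast; ring
  have hcard : (Fintype.card (Σ i : Fin (n + 1), Fin (if i = 0 then 2 * n - 2 else 2)) : ℝ) =
      4 * n - 2 := by
    simp only [Fintype.card_sigma, Fintype.card_fin, Fin.sum_univ_succ, ↓reduceIte,
      Fin.succ_ne_zero, Finset.sum_const, Finset.card_univ, smul_eq_mul, Nat.cast_add, hpart,
      Nat.cast_mul, Nat.cast_ofNat]
    ring
  rw [SimpleGraph.charpoly_distLapMatrix_completeMultipartiteGraph, hcard, Fin.prod_univ_succ]
  simp only [Fintype.card_fin, if_pos, Fin.succ_ne_zero, if_false, Finset.prod_const,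
    Finset.card_univ, Nat.add_sub_cancel, hpart, show 2 * n - 2 - 1 = 2 * n - 3 by omega,
    show (4 * (n : ℝ) - 2 + (2 * n - 2)) = 6 * n - 4 by ring, Nat.cast_ofNat,
    show (4 * (n : ℝ) - 2 + 2) = 4 * n by ring, show 2 - 1 = 1 from rfl, pow_one]
  ring

theorem distLaplacian_spectrum_quaternion (n : ℕ) (hn : 2 ≤ n) :
    (distLapMatrix (SimpleGraph.completeMultipartiteGraph
        fun i : Fin (n + 1) => Fin (if i = 0 then 2 * n - 2 else 2))).charpoly =
      X * (X - C (4 * (n : ℝ) - 2)) ^ n * (X - C (4 * (n : ℝ))) ^ n *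
        (X - C (6 * (n : ℝ) - 4)) ^ (2 * n - 3) ∧
    ∀ μ ∈ (distLapMatrix (SimpleGraph.completeMultipartiteGraph
        fun i : Fin (n + 1) => Fin (if i = 0 then 2 * n - 2 else 2))).charpoly.roots,
      ∃ z : ℤ, μ = (z : ℝ) := by
  refine ⟨charpoly_distLapMatrix_quaternion hn, fun μ hμ => ?_⟩
  have hroot := isRoot_of_mem_roots (charpoly_distLapMatrix_quaternion hn ▸ hμ)
  simp only [IsRoot, eval_mul, eval_pow, eval_sub, eval_X, eval_C, mul_eq_zero, pow_eq_zero_iff',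
    sub_eq_zero] at hroot
  rcases hroot with ((rfl | ⟨rfl, -⟩) | ⟨rfl, -⟩) | ⟨rfl, -⟩
  · exact ⟨0, by simp⟩
  · exact ⟨4 * n - 2, by push_cast; ring⟩
  · exact ⟨4 * n, by push_cast; ring⟩
  · exact ⟨6 * n - 4, by push_cast; ring⟩
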